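/- arXiv:2109.01049 — 4 statements merged into one kernel-verified Lean document; each statement's English description precedes it below -/
import Mathlib

section
/- Let A = (Q, Σ, M, α, η) be an ℝ-weighted automaton with |Q| = n states such that L_A(w) ∈ {0,1} for every word w ∈ Σ* (i.e., A is an ℝ-IFA). Then the language L(A) = {w ∈ Σ* | L_A(w) = 1} is regular; moreover, there is a deterministic finite automaton (DFA) with at most 2^n states whose language equals L(A). -/
open Matrix

/-- **Regularity of ℝ-IFAs.** If an `ℝ`-weighted automaton with state set `Q` maps every
word to `0` or `1`, then its language `{w | L_A(w) = 1}` is accepted by a DFA with at most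
`2 ^ |Q|` states (hence is regular). -/
theorem ifa_language_regular {A Q : Type*} [Fintype A] [Fintype Q] [DecidableEq Q]
    (M : A → Matrix Q Q ℝ) (α η : Q → ℝ)
    (hbin : ∀ w : List A,
      α ⬝ᵥ ((w.map M).prod *ᵥ η) = 0 ∨ α ⬝ᵥ ((w.map M).prod *ᵥ η) = 1) :
    ∃ (σ : Type) (_ : Fintype σ) (D : DFA A σ),
      Fintype.card σ ≤ 2 ^ Fintype.card Q ∧
      ∀ w : List A, w ∈ D.accepts ↔ α ⬝ᵥ ((w.map M).prod *ᵥ η) = 1 := by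
  classical
  set vec : List A → (Q → ℝ) := fun u => ((u.map M).prod) *ᵥ η with hvec
  set val : List A → ℝ := fun w => α ⬝ᵥ vec w with hval
  -- the linear functionals v ↦ α ⬝ M(w) ⬝ v
  set L : List A → ((Q → ℝ) →ₗ[ℝ] ℝ) := fun w =>
    { toFun := fun v => α ⬝ᵥ ((w.map M).prod *ᵥ v)
      map_add' := fun x y => by simp [Matrix.mulVec_add, dotProduct_add]
      map_smul' := fun c x => by simp [Matrix.mulVec_smul, dotProduct_smul] } with hL
  have hLval : ∀ w u : List A, L w (vec u) = val (w ++ u) := by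
    intro w u
    simp [hL, hvec, hval, Matrix.mulVec_mulVec]
  set S : Set (Q → ℝ) := Set.range vec with hS
  obtain ⟨b, hbS, hspan, hli⟩ := exists_linearIndependent ℝ S
  have hbfin : b.Finite := hli.setFinite
  haveI : Fintype b := hbfin.fintype
  have hcard : Fintype.card b ≤ Fintype.card Q := by
    have h1 : Module.finrank ℝ (Submodule.span ℝ b) = Fintype.card b := by
      rw [finrank_span_set_eq_card hli, Set.toFinset_card]
    have h2 : Module.finrank ℝ (Submodule.span ℝ b) ≤
        Module.finrank ℝ (Q → ℝ) := Submodule.finrank_le _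
    have h3 : Module.finrank ℝ (Q → ℝ) = Fintype.card Q := by
      simp [Module.finrank_pi]
    omega
  set g : List A → (b → Bool) := fun w x => decide (L w (x : Q → ℝ) = 1) with hg
  have hval01 : ∀ w : List A, val w = 0 ∨ val w = 1 := hbin
  have key : ∀ w w' : List A, g w = g w' → ∀ u, val (w ++ u) = val (w' ++ u) := by
    intro w w' hgw u
    have hb : ∀ x ∈ b, L w x = L w' x := by
      intro x hx
      obtain ⟨t, ht⟩ := hbS hx
      have hd' : (L w x = 1) ↔ (L w' x = 1) := by
        have := congrFun hgw ⟨x, hx⟩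
        simpa [hg] using this
      have h1 : L w x = val (w ++ t) := by rw [← ht]; exact hLval w t
      have h2 : L w' x = val (w' ++ t) := by rw [← ht]; exact hLval w' t
      rcases hval01 (w ++ t) with h | h <;> rcases hval01 (w' ++ t) with h' | h' <;>
        rw [h1, h2, h, h'] at hd' ⊢ <;> simp_all
    have hker : Submodule.span ℝ b ≤ LinearMap.ker (L w - L w') := by
      rw [Submodule.span_le]
      intro x hx
      simp [LinearMap.mem_ker, hb x hx, sub_eq_zero]
    have hmem : vec u ∈ Submodule.span ℝ b := by
      rw [hspan]; exact Submodule.subset_span ⟨u, rfl⟩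
    have := hker hmem
    rw [LinearMap.mem_ker, LinearMap.sub_apply, sub_eq_zero] at this
    rw [← hLval, ← hLval, this]
  have gcong : ∀ w w' : List A, (∀ u, val (w ++ u) = val (w' ++ u)) → g w = g w' := by
    intro w w' h
    funext x
    obtain ⟨t, ht⟩ := hbS x.2
    simp only [hg]
    congr 1
    rw [← ht, hLval, hLval, h]
  -- the DFA on the range of g
  haveI : Fintype (Set.range g) := (Set.toFinite (Set.range g)).fintype
  set rep : Set.range g → List A := fun s => s.2.choose with hrepdef
  have hrep : ∀ s : Set.range g, g (rep s) = s := fun s => s.2.choose_spec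
  set D : DFA A (Set.range g) :=
    { step := fun s a => ⟨g (rep s ++ [a]), Set.mem_range_self _⟩
      start := ⟨g [], Set.mem_range_self _⟩
      accept := {s | val (rep s) = 1} } with hD
  have heval : ∀ w : List A, D.eval w = ⟨g w, Set.mem_range_self _⟩ := by
    intro w
    induction w using List.reverseRecOn with
    | nil => rfl
    | append_singleton w a ih =>
      rw [DFA.eval_append_singleton, ih]
      simp only [hD]
      congr 1
      apply gcong
      intro u
      have h1 : g (rep ⟨g w, Set.mem_range_self w⟩) = g w := hrep _
      have := key _ _ h1 ([a] ++ u)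
      simpa using this
  have hacc : ∀ w : List A, w ∈ D.accepts ↔ val w = 1 := by
    intro w
    have h0 : w ∈ D.accepts ↔ val (rep ⟨g w, Set.mem_range_self w⟩) = 1 := by
      rw [DFA.mem_accepts, heval]
      rfl
    rw [h0]
    have h1 : g (rep ⟨g w, Set.mem_range_self w⟩) = g w := hrep _
    have := key _ _ h1 []
    simp only [List.append_nil] at this
    rw [this]
  -- transport to a `Type 0` state space
  set k := Fintype.card (Set.range g) with hk
  set e : Set.range g ≃ Fin k := Fintype.equivFin _ with he
  set D' : DFA A (Fin k) :=
    { step := fun s a => e (D.step (e.symm s) a)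
      start := e D.start
      accept := e.symm ⁻¹' D.accept } with hD'
  have heval' : ∀ w : List A, D'.eval w = e (D.eval w) := by
    intro w
    induction w using List.reverseRecOn with
    | nil => rfl
    | append_singleton w a ih =>
      rw [DFA.eval_append_singleton, DFA.eval_append_singleton, ih]
      simp [hD']
  refine ⟨Fin k, inferInstance, D', ?_, ?_⟩
  · have : k ≤ 2 ^ Fintype.card Q := by
      calc k ≤ Fintype.card (b → Bool) :=
        Fintype.card_le_of_injective _ Subtype.val_injective
      _ = 2 ^ Fintype.card b := by simp
      _ ≤ 2 ^ Fintype.card Q := Nat.pow_le_pow_right (by norm_num) hcard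
    simpa using this
  · intro w
    have : w ∈ D'.accepts ↔ w ∈ D.accepts := by
      rw [DFA.mem_accepts, DFA.mem_accepts, heval']
      simp [hD']
    rw [this, hacc]
end

section
/- Let Σ be a finite alphabet and L ⊆ Σ* a language. Then L is regular (accepted by some DFA with finitely many states) if and only if there exists a ℚ-weighted automaton A with L_A(w) ∈ {0,1} for all w ∈ Σ* (an IFA) such that L = {w ∈ Σ* | L_A(w) = 1}. -/
open Matrix

/-- An `F`-weighted automaton over the alphabet `A`: a finite state set `Q`,
transition matrices `M a`, an initial row vector `init`, and a final column vector `fin`. -/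
structure WAut (A : Type*) (F : Type*) [Semiring F] where
  Q : Type
  [fintypeQ : Fintype Q]
  [decEqQ : DecidableEq Q]
  M : A → Matrix Q Q F
  init : Q → F
  fin : Q → F

attribute [instance] WAut.fintypeQ WAut.decEqQ

/-- The value `L_W(w) = α · M(w) · η` of the weighted automaton `W` on the word `w`. -/
def WAut.val {A F : Type*} [Semiring F] (W : WAut A F) (w : List A) : F :=
  W.init ⬝ᵥ ((w.map W.M).prod *ᵥ W.fin)

/-- The number of states of a weighted automaton. -/
def WAut.card {A F : Type*} [Semiring F] (W : WAut A F) : ℕ := Fintype.card W.Q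

/-- An image-binary finite automaton (IFA): a `ℚ`-weighted automaton whose value on every
word is `0` or `1`. -/
def WAut.IsIFA {A : Type*} (W : WAut A ℚ) : Prop :=
  ∀ w : List A, W.val w = 0 ∨ W.val w = 1

-- finiteness lemma
lemma finite_binary {ι : Type*} (V : Submodule ℚ (ι → ℚ)) [FiniteDimensional ℚ V] :
    {f : ι → ℚ | f ∈ V ∧ ∀ i, f i = 0 ∨ f i = 1}.Finite := by
  classical
  set K : Finset ι → Submodule ℚ (ι → ℚ) := fun t =>
    V ⊓ ⨅ i ∈ t, LinearMap.ker (LinearMap.proj i : (ι → ℚ) →ₗ[ℚ] ℚ) with hK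
  have hKmem : ∀ (t : Finset ι) (f : ι → ℚ), f ∈ K t ↔ f ∈ V ∧ ∀ i ∈ t, f i = 0 := by
    intro t f
    simp [hK, Submodule.mem_inf, Submodule.mem_iInf, LinearMap.mem_ker]
  have hKfd : ∀ t, FiniteDimensional ℚ (K t) := fun t =>
    Submodule.finiteDimensional_of_le (inf_le_left)
  set N : Set ℕ := {n | ∃ t, Module.finrank ℚ (K t) = n} with hN
  have hNne : N.Nonempty := ⟨_, ∅, rfl⟩
  obtain ⟨t₀, ht₀⟩ := Nat.sInf_mem hNne
  have hbot : K t₀ = ⊥ := by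
    by_contra hne
    obtain ⟨f, hf, hf0⟩ := Submodule.exists_mem_ne_zero_of_ne_bot hne
    have := hKfd t₀
    obtain ⟨i, hi⟩ : ∃ i, f i ≠ 0 := by
      by_contra h
      push_neg at h
      exact hf0 (funext h)
    have hle0 : K (insert i t₀) ≤ K t₀ := by
      intro g hg
      rw [hKmem] at hg ⊢
      exact ⟨hg.1, fun j hj => hg.2 j (Finset.mem_insert_of_mem hj)⟩
    have hle : K (insert i t₀) < K t₀ := by
      refine lt_of_le_of_ne hle0 fun hEq => ?_
      rw [← hEq, hKmem] at hf
      exact hi (hf.2 i (Finset.mem_insert_self i t₀))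
    have hlt := Submodule.finrank_lt_finrank_of_lt hle
    rw [ht₀] at hlt
    exact absurd (Nat.sInf_le (show _ ∈ N from ⟨_, rfl⟩)) (Nat.not_le.mpr hlt)
  have hinj : Function.Injective
      (fun f : {f : ι → ℚ | f ∈ V ∧ ∀ i, f i = 0 ∨ f i = 1} =>
        (fun i : t₀ => decide (f.1 i = 1))) := by
    rintro ⟨f, hfV, hf01⟩ ⟨g, hgV, hg01⟩ h
    simp only [Subtype.mk.injEq]
    have heq : ∀ i ∈ t₀, f i = g i := by
      intro i hi
      have := congrFun h ⟨i, hi⟩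
      simp only [decide_eq_decide] at this
      rcases hf01 i with h1 | h1 <;> rcases hg01 i with h2 | h2 <;>
        simp [h1, h2] at this ⊢ <;> simp [this]
    have : f - g ∈ K t₀ := by
      rw [hKmem]
      exact ⟨sub_mem hfV hgV, fun i hi => by simp [heq i hi]⟩
    rw [hbot, Submodule.mem_bot, sub_eq_zero] at this
    exact this
  have : Finite {f : ι → ℚ | f ∈ V ∧ ∀ i, f i = 0 ∨ f i = 1} :=
    Finite.of_injective _ hinj
  exact Set.toFinite _

lemma dfa_reindex {A σ₁ : Type*} (D : DFA A σ₁) {σ₂ : Type*} (e : σ₁ ≃ σ₂) :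
    ∃ D₂ : DFA A σ₂, D₂.accepts = D.accepts := by
  classical
  refine ⟨⟨fun s a => e (D.step (e.symm s) a), e D.start, e '' D.accept⟩, ?_⟩
  have key : ∀ (w : List A) (s : σ₁),
      DFA.evalFrom ⟨fun s a => e (D.step (e.symm s) a), e D.start, e '' D.accept⟩ (e s) w
        = e (D.evalFrom s w) := by
    intro w
    induction w with
    | nil => intro s; simp
    | cons a w ih =>
      intro s
      simp only [DFA.evalFrom, List.foldl_cons] at *
      simpa using ih (D.step s a)
  ext w
  rw [DFA.mem_accepts, DFA.mem_accepts]
  show _ ∈ e '' D.accept ↔ _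
  rw [DFA.eval, DFA.eval, key w D.start]
  simp

lemma dfa_to_ifa {A : Type*} {σ : Type} [Fintype σ] (D : DFA A σ) :
    ∃ W : WAut A ℚ, W.IsIFA ∧ D.accepts = {w : List A | W.val w = 1} := by
  classical
  set W : WAut A ℚ := ⟨σ, fun a => Matrix.of fun p q => if D.step p a = q then 1 else 0,
    fun q => if q = D.start then 1 else 0,
    fun q => if q ∈ D.accept then 1 else 0⟩ with hW
  have key : ∀ (w : List A) (q : σ),
      ((w.map W.M).prod *ᵥ W.fin) q = if D.evalFrom q w ∈ D.accept then 1 else 0 := by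
    intro w
    induction w with
    | nil => intro q; simp [hW]; rfl
    | cons a w ih =>
      intro q
      have : ((a :: w).map W.M).prod = W.M a * (w.map W.M).prod := by
        simp
      rw [this, ← Matrix.mulVec_mulVec, Matrix.mulVec]
      show (fun p => W.M a q p) ⬝ᵥ _ = _
      have : (fun p => W.M a q p) ⬝ᵥ ((w.map W.M).prod *ᵥ W.fin)
          = ((w.map W.M).prod *ᵥ W.fin) (D.step q a) := by
        rw [dotProduct]
        simp [W, Finset.sum_ite_eq]
      rw [this, ih (D.step q a)]
      rfl
  have hval : ∀ w : List A, W.val w = if D.eval w ∈ D.accept then 1 else 0 := by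
    intro w
    rw [WAut.val, dotProduct]
    have : ∀ q, W.init q * ((w.map W.M).prod *ᵥ W.fin) q
        = if q = D.start then ((w.map W.M).prod *ᵥ W.fin) q else 0 := by
      intro q
      by_cases h : q = D.start <;> simp [W, h]
    rw [Finset.sum_congr rfl fun q _ => this q]
    rw [Finset.sum_ite_eq' Finset.univ D.start]
    simp [key, DFA.eval]
    exact if_congr Iff.rfl rfl rfl
  refine ⟨W, fun w => ?_, ?_⟩
  · rw [hval]; split <;> simp
  · ext w
    rw [DFA.mem_accepts]
    simp only [Set.mem_setOf_eq, hval]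
    by_cases h : D.eval w ∈ D.accept <;> simp only [h, if_pos, if_neg, Set.mem_setOf_eq] <;> norm_num [h] <;> exact h

lemma ifa_to_dfa {A : Type*} (W : WAut A ℚ) (hIFA : W.IsIFA) :
    ∃ (σ : Type) (_ : Fintype σ) (D : DFA A σ), D.accepts = {w : List A | W.val w = 1} := by
  classical
  set ψ : List A → (W.Q → ℚ) := fun u => (u.map W.M).prod *ᵥ W.fin with hψ
  set T : (W.Q → ℚ) →ₗ[ℚ] (List A → ℚ) :=
    { toFun := fun v => fun u => v ⬝ᵥ ψ u
      map_add' := fun v₁ v₂ => funext fun u => add_dotProduct v₁ v₂ (ψ u)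
      map_smul' := fun c v => funext fun u => smul_dotProduct c v (ψ u) } with hT
  set V : Submodule ℚ (List A → ℚ) := LinearMap.range T with hV
  set S : Set (List A → ℚ) := {f | f ∈ V ∧ ∀ u, f u = 0 ∨ f u = 1} with hS
  have hSfin : S.Finite := finite_binary V
  -- the functions f_w
  have hval_append : ∀ (w u : List A),
      W.val (w ++ u) = (W.init ᵥ* (w.map W.M).prod) ⬝ᵥ ψ u := by
    intro w u
    rw [WAut.val, hψ, List.map_append, List.prod_append, ← Matrix.mulVec_mulVec,
      Matrix.dotProduct_mulVec]
  have hmem : ∀ w : List A, (fun u => W.val (w ++ u)) ∈ S := by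
    intro w
    refine ⟨⟨W.init ᵥ* (w.map W.M).prod, ?_⟩, fun u => hIFA (w ++ u)⟩
    funext u
    rw [hT]
    exact (hval_append w u).symm
  -- shift stays in S
  have hstep : ∀ f ∈ S, ∀ a : A, (fun u => f (a :: u)) ∈ S := by
    rintro f ⟨⟨v, hv⟩, hf01⟩ a
    refine ⟨⟨v ᵥ* W.M a, ?_⟩, fun u => hf01 (a :: u)⟩
    funext u
    have hpsi : ψ (a :: u) = W.M a *ᵥ ψ u := by
      rw [hψ]
      simp [Matrix.mulVec_mulVec]
    calc (T (v ᵥ* W.M a)) u = (v ᵥ* W.M a) ⬝ᵥ ψ u := rfl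
      _ = v ⬝ᵥ (W.M a *ᵥ ψ u) := (Matrix.dotProduct_mulVec v (W.M a) (ψ u)).symm
      _ = v ⬝ᵥ ψ (a :: u) := by rw [hpsi]
      _ = (T v) (a :: u) := rfl
      _ = f (a :: u) := by rw [hv]
  haveI : Fintype ↥S := hSfin.fintype
  set D : DFA A ↥S :=
    ⟨fun s a => ⟨fun u => s.1 (a :: u), hstep s.1 s.2 a⟩,
     ⟨fun u => W.val ([] ++ u), hmem []⟩,
     {s | s.1 [] = 1}⟩ with hD
  have key : ∀ w : List A, (D.eval w).1 = fun u => W.val (w ++ u) := by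
    intro w
    induction w using List.reverseRecOn with
    | nil => rfl
    | append_singleton w a ih =>
      have : D.eval (w ++ [a]) = D.step (D.eval w) a :=
        D.evalFrom_append_singleton D.start w a
      rw [this]
      funext u
      show (D.eval w).1 (a :: u) = W.val ((w ++ [a]) ++ u)
      rw [ih]
      simp
  have hacc : D.accepts = {w : List A | W.val w = 1} := by
    ext w
    rw [DFA.mem_accepts]
    show (D.eval w).1 [] = 1 ↔ _
    rw [key w]
    simp only [List.append_nil, Set.mem_setOf_eq]
    exact Iff.rfl
  obtain ⟨D₂, hD₂⟩ := dfa_reindex D (Fintype.equivFin ↥S)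
  exact ⟨Fin (Fintype.card ↥S), inferInstance, D₂, hD₂.trans hacc⟩

/-- **IFAs accept exactly the regular languages.** A language over a finite alphabet is
accepted by some DFA with finitely many states iff it is the language of an IFA. -/
theorem regular_iff_exists_ifa {A : Type*} [Fintype A] (L : Language A) :
    (∃ (σ : Type) (_ : Fintype σ) (D : DFA A σ), D.accepts = L) ↔
    (∃ W : WAut A ℚ, W.IsIFA ∧ L = {w : List A | W.val w = 1}) := by
  constructor
  · rintro ⟨σ, fσ, D, hD⟩
    obtain ⟨W, h1, h2⟩ := @dfa_to_ifa A σ fσ D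
    exact ⟨W, h1, by rw [← hD, h2]⟩
  · rintro ⟨W, hIFA, hL⟩
    obtain ⟨σ, fσ, D, hD⟩ := ifa_to_dfa W hIFA
    exact ⟨σ, fσ, D, by rw [hD, hL]⟩
end

section
/- Let A₁ and A₂ be IFAs over the same finite alphabet Σ with n₁ and n₂ states, respectively. Then there exists an IFA B with at most n₁ + n₂ + n₁·n₂ states such that L(B) = L(A₁) ∪ L(A₂), i.e., for every word w, L_B(w) = L_{A₁}(w) + L_{A₂}(w) − L_{A₁}(w)·L_{A₂}(w). -/
open Matrix

open Kronecker

/-- Direct sum of two weighted automata: computes the sum of the values. -/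
def WAut.sum {A F : Type*} [Semiring F] (W₁ W₂ : WAut A F) : WAut A F where
  Q := W₁.Q ⊕ W₂.Q
  M a := Matrix.fromBlocks (W₁.M a) 0 0 (W₂.M a)
  init := Sum.elim W₁.init W₂.init
  fin := Sum.elim W₁.fin W₂.fin

lemma WAut.sum_prod {A F : Type*} [Semiring F] (W₁ W₂ : WAut A F) (w : List A) :
    (w.map (W₁.sum W₂).M).prod =
      Matrix.fromBlocks ((w.map W₁.M).prod) 0 0 ((w.map W₂.M).prod) := by
  induction w with
  | nil => simp [Matrix.fromBlocks_one]; rfl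
  | cons a w ih =>
      rw [List.map_cons, List.prod_cons, ih,
        show (W₁.sum W₂).M a = Matrix.fromBlocks (W₁.M a) 0 0 (W₂.M a) from rfl,
        ]
      erw [Matrix.fromBlocks_multiply]
      simp
      rfl

lemma WAut.sum_val {A F : Type*} [Semiring F] (W₁ W₂ : WAut A F) (w : List A) :
    (W₁.sum W₂).val w = W₁.val w + W₂.val w := by
  simp only [WAut.val, WAut.sum_prod]
  show Sum.elim W₁.init W₂.init ⬝ᵥ _ = _
  rw [show (W₁.sum W₂).fin = Sum.elim W₁.fin W₂.fin from rfl]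
  erw [Matrix.fromBlocks_mulVec]
  simp [sumElim_dotProduct_sumElim]

/-- Tensor product of two weighted automata, with negated initial vector:
computes minus the product of the values. -/
def WAut.negProd {A F : Type*} [CommRing F] (W₁ W₂ : WAut A F) : WAut A F where
  Q := W₁.Q × W₂.Q
  M a := W₁.M a ⊗ₖ W₂.M a
  init p := -(W₁.init p.1 * W₂.init p.2)
  fin p := W₁.fin p.1 * W₂.fin p.2

lemma WAut.negProd_prod {A F : Type*} [CommRing F] (W₁ W₂ : WAut A F) (w : List A) :
    (w.map (W₁.negProd W₂).M).prod = ((w.map W₁.M).prod) ⊗ₖ ((w.map W₂.M).prod) := by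
  induction w with
  | nil => simp [Matrix.one_kronecker_one]; rfl
  | cons a w ih =>
      rw [List.map_cons, List.prod_cons, ih, List.map_cons, List.prod_cons,
        List.map_cons, List.prod_cons, Matrix.mul_kronecker_mul]
      rfl

lemma WAut.negProd_val {A F : Type*} [CommRing F] (W₁ W₂ : WAut A F) (w : List A) :
    (W₁.negProd W₂).val w = -(W₁.val w * W₂.val w) := by
  simp only [WAut.val, WAut.negProd_prod]
  show (fun p : W₁.Q × W₂.Q => -(W₁.init p.1 * W₂.init p.2)) ⬝ᵥ _ = _
  have hmul : (((w.map W₁.M).prod ⊗ₖ (w.map W₂.M).prod) *ᵥ (W₁.negProd W₂).fin) =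
      fun p : W₁.Q × W₂.Q =>
        ((w.map W₁.M).prod *ᵥ W₁.fin) p.1 * ((w.map W₂.M).prod *ᵥ W₂.fin) p.2 := by
    funext p
    simp only [Matrix.mulVec, dotProduct, Finset.sum_mul_sum,
      Fintype.sum_prod_type, WAut.negProd]
    refine Finset.sum_congr rfl fun k _ => Finset.sum_congr rfl fun l _ => ?_
    simp only [Matrix.kroneckerMap_apply]
    ring
  erw [hmul]
  simp only [dotProduct, Fintype.sum_prod_type, neg_mul, neg_eq_iff_eq_neg,
    neg_neg, Finset.sum_mul_sum, Finset.sum_neg_distrib]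
  refine Finset.sum_congr rfl fun k _ => Finset.sum_congr rfl fun l _ => ?_
  ring

/-- **Union of IFAs.** For IFAs `W₁, W₂` with `n₁, n₂` states there is an IFA `B` with at
most `n₁ + n₂ + n₁·n₂` states such that
`L_B(w) = L_{W₁}(w) + L_{W₂}(w) - L_{W₁}(w)·L_{W₂}(w)` for all `w`,
i.e. `L(B) = L(W₁) ∪ L(W₂)`. -/
theorem ifa_union {A : Type*} (W₁ W₂ : WAut A ℚ) (h₁ : W₁.IsIFA) (h₂ : W₂.IsIFA) :
    ∃ B : WAut A ℚ, B.card ≤ W₁.card + W₂.card + W₁.card * W₂.card ∧ B.IsIFA ∧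
      ∀ w : List A, B.val w = W₁.val w + W₂.val w - W₁.val w * W₂.val w := by
  refine ⟨(W₁.sum W₂).sum (W₁.negProd W₂), ?_, ?_, ?_⟩
  · simp [WAut.card, WAut.sum, WAut.negProd]
    simp only [Fintype.card_eq_nat_card, Nat.card_sum, Nat.card_prod, le_refl]
    erw [Fintype.card_eq_nat_card]
    simp only [Nat.card_sum, Nat.card_prod, le_refl]
  · intro w
    rcases h₁ w with h | h <;> rcases h₂ w with h' | h' <;>
      simp [WAut.sum_val, WAut.negProd_val, h, h']
  · intro w
    rw [WAut.sum_val, WAut.sum_val, WAut.negProd_val]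
    ring
end

section
/- Let d ≥ 1 and N = 2^d − 1. Let a : ℕ → ℝ be a sequence with a_k ∈ {0, 1} for all k and a_{k+N} = a_k for all k (period N), and suppose its auto-correlation C(τ) := Σ_{k=1}^{N} a_k·a_{k+τ} satisfies C(0) = 2^{d−1} and C(τ) = 2^{d−2} for all τ with 0 < τ < N. Then the N×N real matrix H defined by H_{i,j} = a_{i+j} (indices i, j ranging over 0,…,N−1) is invertible, i.e., has full rank N over ℝ. -/
/-- **Full rank of the Hankel matrix of a maximal-period shift register sequence.**
If `a` is a `{0,1}`-valued sequence of period `N = 2^d - 1` whose auto-correlation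
`C(τ) = Σ_{k=1}^{N} a_k a_{k+τ}` equals `2^{d-1}` for `τ = 0` and `2^{d-2}` for
`0 < τ < N`, then the `N × N` matrix `H` with `H i j = a (i + j)` is invertible. -/
theorem hankel_shift_register_invertible (d : ℕ) (hd : 1 ≤ d) (a : ℕ → ℝ)
    (hbin : ∀ k, a k = 0 ∨ a k = 1)
    (hper : ∀ k, a (k + (2 ^ d - 1)) = a k)
    (hC0 : ∑ k ∈ Finset.Icc 1 (2 ^ d - 1), a k * a k = (2 : ℝ) ^ ((d : ℤ) - 1))
    (hCpos : ∀ τ : ℕ, 0 < τ → τ < 2 ^ d - 1 →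
      ∑ k ∈ Finset.Icc 1 (2 ^ d - 1), a k * a (k + τ) = (2 : ℝ) ^ ((d : ℤ) - 2)) :
    IsUnit (Matrix.of fun i j : Fin (2 ^ d - 1) => a (i.val + j.val)) := by
  classical
  set N := 2 ^ d - 1 with hNdef
  have hN2 : 2 ≤ 2 ^ d := by
    calc (2:ℕ) = 2 ^ 1 := by norm_num
    _ ≤ 2 ^ d := Nat.pow_le_pow_right (by norm_num) hd
  have hN1 : 1 ≤ N := by omega
  -- step lemma : shifting both indices by 1 preserves the windowed sum
  have hstep : ∀ i j : ℕ, ∑ k ∈ Finset.range N, a (i + 1 + k) * a (j + 1 + k)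
      = ∑ k ∈ Finset.range N, a (i + k) * a (j + k) := by
    intro i j
    have e1 : ∑ k ∈ Finset.range N, a (i + 1 + k) * a (j + 1 + k)
        = ∑ k ∈ Finset.range N, a (i + (k + 1)) * a (j + (k + 1)) :=
      Finset.sum_congr rfl fun k _ => by
        rw [show i + 1 + k = i + (k + 1) from by omega,
            show j + 1 + k = j + (k + 1) from by omega]
    have h1 := Finset.sum_range_succ' (fun k => a (i + k) * a (j + k)) N
    have h2 := Finset.sum_range_succ (fun k => a (i + k) * a (j + k)) N
    have h3 : a (i + N) * a (j + N) = a (i + 0) * a (j + 0) := by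
      rw [hper, hper, Nat.add_zero, Nat.add_zero]
    rw [e1]
    linarith [h1, h2, h3]
  have hshift : ∀ τ i : ℕ, ∑ k ∈ Finset.range N, a (i + k) * a (i + τ + k)
      = ∑ k ∈ Finset.range N, a k * a (τ + k) := by
    intro τ i
    induction i with
    | zero => simp
    | succ n ih =>
      have h := hstep n (n + τ)
      calc ∑ k ∈ Finset.range N, a (n + 1 + k) * a (n + 1 + τ + k)
          = ∑ k ∈ Finset.range N, a (n + 1 + k) * a (n + τ + 1 + k) := by
            apply Finset.sum_congr rfl; intro k _
            rw [show n + 1 + τ + k = n + τ + 1 + k from by omega]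
        _ = ∑ k ∈ Finset.range N, a (n + k) * a (n + τ + k) := h
        _ = ∑ k ∈ Finset.range N, a k * a (τ + k) := ih
  -- relate range sum to the Icc correlation sums
  have hIcc : ∀ τ : ℕ, ∑ k ∈ Finset.range N, a k * a (τ + k)
      = ∑ k ∈ Finset.Icc 1 N, a k * a (k + τ) := by
    intro τ
    rw [show Finset.Icc 1 N = Finset.Ico 1 (N + 1) from by rw [Finset.Ico_add_one_right_eq_Icc],
       Finset.sum_Ico_eq_sum_range]
    simp only [Nat.add_sub_cancel]
    have h := hstep 0 τ
    have e1 : ∑ k ∈ Finset.range N, a (0 + 1 + k) * a (τ + 1 + k)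
        = ∑ k ∈ Finset.range N, a (1 + k) * a (1 + k + τ) := by
      apply Finset.sum_congr rfl; intro k _
      rw [show 0 + 1 + k = 1 + k from by omega, show τ + 1 + k = 1 + k + τ from by omega]
    have e2 : ∑ k ∈ Finset.range N, a k * a (τ + k)
        = ∑ k ∈ Finset.range N, a (0 + k) * a (τ + k) := by
      apply Finset.sum_congr rfl; intro k _
      rw [Nat.zero_add]
    rw [e2, ← h, e1]
  -- key evaluation
  have hq2 : (2 : ℝ) ^ ((d : ℤ) - 1) = 2 * (2 : ℝ) ^ ((d : ℤ) - 2) := by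
    rw [show (d : ℤ) - 1 = ((d : ℤ) - 2) + 1 from by ring, zpow_add_one₀ two_ne_zero]
    ring
  set q : ℝ := (2 : ℝ) ^ ((d : ℤ) - 2) with hqdef
  have hval : ∀ i j : ℕ, i ≤ j → j - i < N →
      ∑ k ∈ Finset.range N, a (i + k) * a (j + k) = if i = j then 2 * q else q := by
    intro i j hij hlt
    obtain ⟨τ, rfl⟩ : ∃ τ, j = i + τ := ⟨j - i, by omega⟩
    have hτ : τ < N := by omega
    rw [hshift τ i, hIcc τ]
    by_cases h : τ = 0
    · subst h
      simp only [Nat.add_zero, if_pos rfl]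
      rw [hq2] at hC0
      simpa using hC0
    · rw [if_neg (by omega)]
      exact hCpos τ (by omega) hτ
  -- the matrix computation
  set H : Matrix (Fin N) (Fin N) ℝ := Matrix.of fun i j : Fin N => a (i.val + j.val) with hH
  set J : Matrix (Fin N) (Fin N) ℝ := Matrix.of fun _ _ => (1 : ℝ) with hJ
  have key : H * H.transpose = q • (1 + J) := by
    ext i j
    have : (H * H.transpose) i j = ∑ k ∈ Finset.range N, a (i.val + k) * a (j.val + k) := by
      rw [Matrix.mul_apply]
      rw [← Fin.sum_univ_eq_sum_range (fun k => a (i.val + k) * a (j.val + k)) N]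
      rfl
    rw [this]
    have hrhs : (q • (1 + J)) i j = if i = j then 2 * q else q := by
      simp [Matrix.one_apply, hJ]
      by_cases h : i = j <;> simp [h] <;> ring
    rw [hrhs]
    rcases le_or_gt i.val j.val with h | h
    · rw [hval i.val j.val h (by omega)]
      simp [Fin.ext_iff]
    · have e : ∑ k ∈ Finset.range N, a (i.val + k) * a (j.val + k)
          = ∑ k ∈ Finset.range N, a (j.val + k) * a (i.val + k) := by
        apply Finset.sum_congr rfl; intro k _; ring
      rw [e, hval j.val i.val (by omega) (by omega)]
      rw [if_neg (show ¬ (j.val = i.val) from by omega),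
          if_neg (show ¬ i = j from fun hc => by rw [hc] at h; exact lt_irrefl _ h)]
  -- invertibility of 1 + J
  have hJJ : J * J = ((N : ℝ)) • J := by
    ext i j
    simp [hJ, Matrix.mul_apply]
  have hNcast : (N : ℝ) + 1 = (2 : ℝ) ^ d := by
    have : (N : ℕ) + 1 = 2 ^ d := by omega
    have := congrArg (Nat.cast : ℕ → ℝ) this
    push_cast at this
    linarith
  obtain ⟨e, hedef⟩ : ∃ e : ℝ, e = -((2 : ℝ) ^ d)⁻¹ := ⟨_, rfl⟩
  have hpow : (2 : ℝ) ^ d ≠ 0 := by positivity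
  have hinv : ((1 : Matrix (Fin N) (Fin N) ℝ) + J) * (1 + e • J) = 1 := by
    have expand : ((1 : Matrix (Fin N) (Fin N) ℝ) + J) * (1 + e • J)
        = 1 + (e + 1 + e * N) • J := by
      simp only [add_mul, mul_add, Matrix.mul_smul, hJJ, one_mul, mul_one, smul_smul]
      module
    have hc : e + 1 + e * (N : ℝ) = 0 := by
      have h1 : e * ((N : ℝ) + 1) = -1 := by
        rw [hedef, hNcast, neg_mul, inv_mul_cancel₀ hpow]
      linear_combination h1
    rw [expand, hc, zero_smul, add_zero]
  have hunitA : IsUnit ((1 : Matrix (Fin N) (Fin N) ℝ) + J).det := by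
    have hdets := congrArg Matrix.det hinv
    rw [Matrix.det_mul, Matrix.det_one] at hdets
    exact IsUnit.of_mul_eq_one _ hdets
  have hqne : q ≠ 0 := by rw [hqdef]; positivity
  have hunitM : IsUnit (H * H.transpose) := by
    rw [key, Matrix.isUnit_iff_isUnit_det, Matrix.det_smul]
    refine IsUnit.mul (IsUnit.pow _ ?_) ?_
    · exact isUnit_iff_ne_zero.mpr hqne
    · exact hunitA
  have hdet : IsUnit (H.det * H.det) := by
    have := (Matrix.isUnit_iff_isUnit_det _).mp hunitM
    rwa [Matrix.det_mul, Matrix.det_transpose] at this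
  rw [Matrix.isUnit_iff_isUnit_det]
  exact isUnit_of_mul_isUnit_left hdet
end
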